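/- Let G be a noncompact locally compact second countable group, (Y, γ) a standard nonatomic probability space, T = (T_g)_{g∈G} a mixing γ-preserving Borel G-action, and 𝐁 = (B_n)_{n≥1} measurable subsets with γ(B_n) = 1/2 for all n, such that for every compact K ⊆ G, ∑_{n=1}^∞ sup_{g∈K} γ(T_g B_n △ B_n) < ∞. Let μ = γ^𝐁 on X = Y^ℕ and 𝐓_g := T_g × T_g × ⋯. Then the measure-preserving G-action 𝐓 = (𝐓_g)_{g∈G} on (X, μ) is of 0-type: for all measurable A, B ⊆ X with μ(A) < ∞ and μ(B) < ∞, μ(𝐓_g A ∩ B) → 0 as g → ∞ along the cocompact filter of G. -/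

import Mathlib

open MeasureTheory Filter Topology Set ENNReal

noncomputable section

section ActionDefs

variable {G X : Type*}

/-- A Borel action of a group `G` on a measurable space `X`. -/
def IsBorelAction [Group G] [MeasurableSpace G] [MeasurableSpace X]
    (T : G → X → X) : Prop :=
  Measurable (Function.uncurry T) ∧ (∀ x, T 1 x = x) ∧ ∀ g h x, T (g * h) x = T g (T h x)

/-- A measure-preserving Borel action. -/
def IsMPAction [Group G] [MeasurableSpace G] [MeasurableSpace X]
    (μ : Measure X) (T : G → X → X) : Prop :=
  IsBorelAction T ∧ ∀ g, MeasurePreserving (T g) μ μ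

/-- A nonsingular Borel action: each `μ ∘ T g` is mutually absolutely continuous with `μ`. -/
def IsNonsingularAction [Group G] [MeasurableSpace G] [MeasurableSpace X]
    (μ : Measure X) (T : G → X → X) : Prop :=
  IsBorelAction T ∧ ∀ g, μ.map (T g) ≪ μ ∧ μ ≪ μ.map (T g)

/-- An action is of 0-type if `μ (T g A ∩ B) → 0` as `g → ∞` along the cocompact filter,
for all sets `A`, `B` of finite measure. -/
def IsZeroType [Group G] [MeasurableSpace G] [TopologicalSpace G] [MeasurableSpace X]
    (μ : Measure X) (T : G → X → X) : Prop :=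
  ∀ A B : Set X, MeasurableSet A → MeasurableSet B → μ A ≠ ∞ → μ B ≠ ∞ →
    Tendsto (fun g : G => μ (T g '' A ∩ B)) (cocompact G) (𝓝 0)

/-- A probability-preserving action is mixing if `μ (T g A ∩ B) → μ A * μ B` as `g → ∞`. -/
def IsMixingAction [Group G] [MeasurableSpace G] [TopologicalSpace G] [MeasurableSpace X]
    (μ : Measure X) (T : G → X → X) : Prop :=
  ∀ A B : Set X, MeasurableSet A → MeasurableSet B →
    Tendsto (fun g : G => μ (T g '' A ∩ B)) (cocompact G) (𝓝 (μ A * μ B))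

/-- A free action: a.e. point has trivial stabilizer. -/
def IsFreeAction [Group G] [MeasurableSpace X] (μ : Measure X) (T : G → X → X) : Prop :=
  ∀ᵐ x ∂μ, ∀ g : G, T g x = x → g = 1

/-- A `T`-Følner sequence of sets of finite positive measure. -/
def IsFolner [Group G] [TopologicalSpace G] [MeasurableSpace X]
    (μ : Measure X) (T : G → X → X) (A : ℕ → Set X) : Prop :=
  (∀ n, MeasurableSet (A n) ∧ 0 < μ (A n) ∧ μ (A n) ≠ ∞) ∧
    ∀ K : Set G, IsCompact K →
      Tendsto (fun n => ⨆ g ∈ K, μ (symmDiff (T g '' A n) (A n)) / μ (A n)) atTop (𝓝 0)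

/-- The restriction of the action to an invariant set `A` is totally dissipative:
there is a measurable subset `W ⊆ A` meeting the orbit of a.e. point of `A` exactly once,
and a.e. point of `A` has compact stabilizer. -/
def IsTotallyDissipativeOn [Group G] [TopologicalSpace G] [MeasurableSpace X]
    (μ : Measure X) (T : G → X → X) (A : Set X) : Prop :=
  ∃ W : Set X, MeasurableSet W ∧ W ⊆ A ∧
    ∀ᵐ z ∂(μ.restrict A),
      (∃! w, w ∈ W ∧ ∃ g : G, T g z = w) ∧ IsCompact {g : G | T g z = z}

/-- A totally dissipative action. -/
def IsTotallyDissipative [Group G] [TopologicalSpace G] [MeasurableSpace X]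
    (μ : Measure X) (T : G → X → X) : Prop :=
  IsTotallyDissipativeOn μ T Set.univ

/-- The restriction of the action to the invariant set `A` is conservative: no invariant
subset of `A` of positive measure on which the action is totally dissipative. -/
def IsConservativeOn [Group G] [TopologicalSpace G] [MeasurableSpace X]
    (μ : Measure X) (T : G → X → X) (A : Set X) : Prop :=
  ¬ ∃ B : Set X, B ⊆ A ∧ MeasurableSet B ∧ 0 < μ B ∧ (∀ g : G, T g ⁻¹' B = B) ∧
      IsTotallyDissipativeOn μ T B

/-- A conservative action. -/
def IsConservativeAction [Group G] [TopologicalSpace G] [MeasurableSpace X]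
    (μ : Measure X) (T : G → X → X) : Prop :=
  IsConservativeOn μ T Set.univ

/-- An ergodic action: every a.e. invariant set is null or conull. -/
def IsErgodicAction [Group G] [MeasurableSpace X] (μ : Measure X) (T : G → X → X) : Prop :=
  ∀ A : Set X, MeasurableSet A → (∀ g : G, μ (symmDiff (T g '' A) A) = 0) →
    μ A = 0 ∨ μ Aᶜ = 0

/-- A properly ergodic action: ergodic, and the measure is not concentrated on one orbit. -/
def IsProperlyErgodic [Group G] [MeasurableSpace X] (μ : Measure X) (T : G → X → X) : Prop :=
  IsErgodicAction μ T ∧ ¬ ∃ z : X, μ {y | ∃ g : G, T g z = y}ᶜ = 0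

/-- A weakly mixing action: the product with every ergodic probability-preserving action
on a standard probability space is ergodic. -/
def IsWeaklyMixingAction [Group G] [MeasurableSpace G] [MeasurableSpace X]
    (μ : Measure X) (T : G → X → X) : Prop :=
  ∀ (Z : Type) [MeasurableSpace Z] [StandardBorelSpace Z] (κ : Measure Z)
    [IsProbabilityMeasure κ] (R : G → Z → Z),
    IsMPAction κ R → IsErgodicAction κ R →
      IsErgodicAction (μ.prod κ) (fun g p => (T g p.1, R g p.2))

/-- A sharply weak mixing action: properly ergodic, and the product with every ergodic
conservative nonsingular action on a nonatomic standard probability space is either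
ergodic or totally dissipative. -/
def IsSharplyWeakMixing [Group G] [MeasurableSpace G] [TopologicalSpace G] [MeasurableSpace X]
    (μ : Measure X) (T : G → X → X) : Prop :=
  IsProperlyErgodic μ T ∧
    ∀ (Z : Type) [MeasurableSpace Z] [StandardBorelSpace Z] (κ : Measure Z)
      [IsProbabilityMeasure κ] (R : G → Z → Z),
      (∀ z : Z, κ {z} = 0) →
      IsNonsingularAction κ R → IsErgodicAction κ R → IsConservativeAction κ R →
        (IsErgodicAction (μ.prod κ) (fun g p => (T g p.1, R g p.2)) ∨
          IsTotallyDissipative (μ.prod κ) (fun g p => (T g p.1, R g p.2)))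

end ActionDefs

/-- A witness for the Haagerup property: a weakly continuous unitary representation of `G`
on a separable complex Hilbert space whose matrix coefficients vanish at infinity and which
has almost-invariant unit vectors. -/
structure HaagerupWitness (G : Type*) [Group G] [TopologicalSpace G] where
  (E : Type)
  [nacg : NormedAddCommGroup E]
  [ips : InnerProductSpace ℂ E]
  [cs : CompleteSpace E]
  [sct : SecondCountableTopology E]
  (V : G →* (E ≃ₗᵢ[ℂ] E))
  (weak_cont : ∀ ξ η : E, Continuous fun g : G => (inner ℂ (V g ξ) η : ℂ))
  (c0 : ∀ ξ η : E, Tendsto (fun g : G => (inner ℂ (V g ξ) η : ℂ)) (cocompact G) (𝓝 0))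
  (almost_inv : ∀ ε : ℝ, 0 < ε → ∀ K : Set G, IsCompact K →
    ∃ ξ : E, ‖ξ‖ = 1 ∧ ∀ g ∈ K, ‖V g ξ - ξ‖ < ε)

/-- The Haagerup property for a topological group `G`. -/
def HasHaagerupProperty (G : Type*) [Group G] [TopologicalSpace G] : Prop :=
  Nonempty (HaagerupWitness G)

/-- Property (T) for the pair `H ⊆ G`: every weakly continuous unitary representation of `G`
on a separable complex Hilbert space with almost-invariant unit vectors has a nonzero
`H`-invariant vector. -/
def HasPropertyTPair (G : Type*) [Group G] [TopologicalSpace G] (H : Subgroup G) : Prop :=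
  ∀ (E : Type) [NormedAddCommGroup E] [InnerProductSpace ℂ E] [CompleteSpace E]
    [SecondCountableTopology E] (V : G →* (E ≃ₗᵢ[ℂ] E)),
    (∀ ξ η : E, Continuous fun g : G => (inner ℂ (V g ξ) η : ℂ)) →
    (∀ ε : ℝ, 0 < ε → ∀ K : Set G, IsCompact K →
      ∃ ξ : E, ‖ξ‖ = 1 ∧ ∀ g ∈ K, ‖V g ξ - ξ‖ < ε) →
    ∃ η : E, η ≠ 0 ∧ ∀ h ∈ H, V h η = η

/-- The squared Hellinger distance of two measures `α`, `β` with respect to a reference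
measure `γ`. -/
def hellingerSq {Y : Type*} [MeasurableSpace Y] (γ α β : Measure Y) : ℝ :=
  (1 / 2) * ∫ y, (Real.sqrt (α.rnDeriv γ y).toReal - Real.sqrt (β.rnDeriv γ y).toReal) ^ 2 ∂γ

/-- The tail cylinder `𝐁ⁿ = Yⁿ × B n × B (n+1) × ⋯` (with `0`-based indexing): the set of
sequences whose `j`-th coordinate lies in `B j` for every `j ≥ n`. -/
def tailCylinder {Y : Type*} (B : ℕ → Set Y) (n : ℕ) : Set (ℕ → Y) :=
  {x : ℕ → Y | ∀ j, n ≤ j → x j ∈ B j}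

/-!
The diagonal action `𝐓` preserves `μ = γ^𝐁`. Take a box whose sides `T_g⁻¹ C_n` are eventually
`T_g⁻¹ B_n`; replacing its sides beyond `M` by `B_n` gives a box of the right measure, and the two
differ by at most a constant times `∑_{n ≥ M} γ(B_n \ T_g⁻¹ B_n)`, which tends to 0. Together with
Borel–Cantelli (`𝐓_g` maps a.e. point of the conull set `⋃ 𝐁ⁿ` into it), this makes `μ ∘ 𝐓_g⁻¹`
and `μ` agree on every `𝐁ⁿ`, hence everywhere.

As the sets `𝐁ⁿ` have finite measure and exhaust `X` up to a null set, 0-type reduces to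
`μ(𝐓_g 𝐁ⁿ ∩ 𝐁ⁿ) → 0`. That set lies in the box with sides `B_j ∩ T_g B_j` for `n ≤ j < n + k`,
of measure `μ(𝐁ⁿ) ∏ γ(B_j ∩ T_g B_j) / γ(B_j)`, and by mixing each factor tends to
`γ(B_j) = 1/2`.
-/

open Function

namespace IsBorelAction

variable {G X : Type*} [Group G] [MeasurableSpace G] [MeasurableSpace X] {T : G → X → X}

theorem measurable_apply (hT : IsBorelAction T) (g : G) : Measurable (T g) :=
  hT.1.comp measurable_prodMk_left

theorem image_eq_preimage_inv (hT : IsBorelAction T) (g : G) (s : Set X) :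
    T g '' s = T g⁻¹ ⁻¹' s :=
  congrFun (image_eq_preimage_of_inverse (fun x => by rw [← hT.2.2, inv_mul_cancel, hT.2.1])
    (fun x => by rw [← hT.2.2, mul_inv_cancel, hT.2.1])) s

theorem pi (hT : IsBorelAction T) (ι : Type*) :
    IsBorelAction (fun (g : G) (x : ι → X) (j : ι) => T g (x j)) :=
  ⟨measurable_pi_lambda _ fun j =>
      hT.1.comp (measurable_fst.prodMk ((measurable_pi_apply j).comp measurable_snd)),
    fun x => funext fun j => hT.2.1 (x j), fun g h x => funext fun j => hT.2.2 g h (x j)⟩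

end IsBorelAction

theorem IsMPAction.measure_image {G X : Type*} [Group G] [MeasurableSpace G] [MeasurableSpace X]
    {μ : Measure X} {T : G → X → X} (hT : IsMPAction μ T) (g : G) {s : Set X}
    (hs : MeasurableSet s) : μ (T g '' s) = μ s := by
  rw [hT.1.image_eq_preimage_inv]
  exact (hT.2 g⁻¹).measure_preimage hs.nullMeasurableSet

theorem tendsto_measure_diff_atTop_of_ae_mem_iUnion {X : Type*} [MeasurableSpace X]
    {μ : Measure X} {S : ℕ → Set X} (hSm : ∀ n, MeasurableSet (S n)) (hS : Monotone S)
    (hae : ∀ᵐ x ∂μ, x ∈ ⋃ n, S n) {A : Set X} (hA : MeasurableSet A) (hAfin : μ A ≠ ∞) :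
    Tendsto (fun n => μ (A \ S n)) atTop (𝓝 0) := by
  have h := tendsto_measure_iInter_atTop (fun n => (hA.diff (hSm n)).nullMeasurableSet)
    (fun m n hmn => sdiff_subset_sdiff_right (hS hmn))
    ⟨0, ne_top_of_le_ne_top hAfin (measure_mono sdiff_subset)⟩
  rwa [← sdiff_iUnion, measure_mono_null (fun x hx => hx.2) hae] at h

theorem IsZeroType.of_tendsto_exhaustion {G X : Type*} [Group G] [MeasurableSpace G]
    [TopologicalSpace G] [MeasurableSpace X] {μ : Measure X} {T : G → X → X}
    (hT : IsMPAction μ T) {S : ℕ → Set X} (hSm : ∀ n, MeasurableSet (S n)) (hS : Monotone S)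
    (hae : ∀ᵐ x ∂μ, x ∈ ⋃ n, S n)
    (h : ∀ n, Tendsto (fun g => μ (T g '' S n ∩ S n)) (cocompact G) (𝓝 0)) :
    IsZeroType μ T := by
  intro A A' hA hA' hAfin hA'fin
  rw [ENNReal.tendsto_nhds_zero]
  intro ε hε
  have hε2 : 0 < ε / 2 := ENNReal.half_pos hε.ne'
  have hrest := (tendsto_measure_diff_atTop_of_ae_mem_iUnion hSm hS hae hA hAfin).add
    (tendsto_measure_diff_atTop_of_ae_mem_iUnion hSm hS hae hA' hA'fin)
  rw [add_zero] at hrest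
  obtain ⟨n, hn⟩ := (hrest.eventually_le_const hε2).exists
  filter_upwards [(h n).eventually_le_const hε2] with g hg
  have hcover : T g '' A ∩ A' ⊆ (T g '' S n ∩ S n) ∪ (T g '' (A \ S n) ∪ (A' \ S n)) := by
    rintro _ ⟨⟨a, ha, rfl⟩, ha'⟩
    by_cases haS : a ∈ S n
    · by_cases hgaS : T g a ∈ S n
      · exact Or.inl ⟨mem_image_of_mem _ haS, hgaS⟩
      · exact Or.inr (Or.inr ⟨ha', hgaS⟩)
    · exact Or.inr (Or.inl (mem_image_of_mem _ ⟨ha, haS⟩))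
  calc μ (T g '' A ∩ A')
      ≤ μ (T g '' S n ∩ S n) + (μ (T g '' (A \ S n)) + μ (A' \ S n)) :=
        (measure_mono hcover).trans <|
          (measure_union_le _ _).trans (by gcongr; exact measure_union_le _ _)
    _ = μ (T g '' S n ∩ S n) + (μ (A \ S n) + μ (A' \ S n)) := by
        rw [hT.measure_image g (hA.diff (hSm n))]
    _ ≤ ε / 2 + ε / 2 := add_le_add hg hn
    _ = ε := ENNReal.add_halves ε

section RestrictedPower

variable {Y : Type*}

theorem tailCylinder_eq_univ_pi (B : ℕ → Set Y) (n : ℕ) :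
    tailCylinder B n = univ.pi fun j => if j < n then univ else B j := by
  ext x
  simp only [tailCylinder, mem_ofPred_eq, mem_univ_pi]
  refine forall_congr' fun j => ?_
  by_cases hj : j < n <;> simp [hj, not_lt.1]

theorem monotone_tailCylinder (B : ℕ → Set Y) : Monotone (tailCylinder B) :=
  fun _ _ hmn _ hx j hj => hx j (hmn.trans hj)

theorem univ_pi_inter_preimage_eval (C : ℕ → Set Y) (k : ℕ) (E : Set Y) :
    univ.pi C ∩ eval k ⁻¹' E = univ.pi (update C k (C k ∩ E)) := by
  ext x
  simp only [mem_inter_iff, mem_univ_pi, mem_preimage, eval]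
  constructor
  · rintro ⟨hx, hxE⟩ j
    rcases eq_or_ne j k with rfl | hjk
    · exact (update_self j _ C).symm ▸ ⟨hx j, hxE⟩
    · exact (update_of_ne hjk _ C).symm ▸ hx j
  · intro hx
    have hk := hx k
    rw [update_self] at hk
    refine ⟨fun j => ?_, hk.2⟩
    rcases eq_or_ne j k with rfl | hjk
    · exact hk.1
    · simpa only [update_of_ne hjk] using hx j

variable [MeasurableSpace Y]

theorem measurableSet_tailCylinder {B : ℕ → Set Y} (hBm : ∀ j, MeasurableSet (B j)) (n : ℕ) :
    MeasurableSet (tailCylinder B n) := by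
  rw [tailCylinder_eq_univ_pi]
  exact MeasurableSet.univ_pi fun j => by split_ifs; exacts [MeasurableSet.univ, hBm j]

theorem exists_univ_pi_eq_pi_inter_tailCylinder {B : ℕ → Set Y}
    (hBm : ∀ j, MeasurableSet (B j)) (s : Finset ℕ) {t : ℕ → Set Y}
    (ht : ∀ j, MeasurableSet (t j)) (n : ℕ) :
    ∃ m C, (∀ j, MeasurableSet (C j)) ∧ (∀ j, m ≤ j → C j = B j) ∧
      (s : Set ℕ).pi t ∩ tailCylinder B n = univ.pi C := by
  refine ⟨n + (s.sup id + 1),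
    fun j => (if j ∈ s then t j else univ) ∩ (if n ≤ j then B j else univ),
    fun j => MeasurableSet.inter (by split_ifs <;> simp [ht j]) (by split_ifs <;> simp [hBm j]),
    fun j hj => ?_, ?_⟩
  · have hjs : j ∉ s := fun hjs => by
      have := Finset.le_sup (f := id) hjs
      simp only [id] at this
      omega
    simp [hjs, show n ≤ j by omega]
  · ext x
    simp [tailCylinder, mem_ite_univ_right, forall_and]

/-- The restricted infinite power `γ^𝐁` (0-based indexing), described by its values on boxes
whose sides are eventually those of `𝐁`. -/
structure IsRestrictedPower (γ : Measure Y) (B : ℕ → Set Y) (μ : Measure (ℕ → Y)) : Prop where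
  measure_univ_pi : ∀ (m : ℕ) (C : ℕ → Set Y), (∀ j, MeasurableSet (C j)) →
    (∀ j, m ≤ j → C j = B j) → μ (univ.pi C) = ∏ j ∈ Finset.range m, γ (C j) / γ (B j)
  ae_eventually_mem : ∀ᵐ x ∂μ, ∀ᶠ j in atTop, x j ∈ B j

namespace IsRestrictedPower

variable {γ : Measure Y} {B : ℕ → Set Y} {μ : Measure (ℕ → Y)}

theorem ae_mem_iUnion_tailCylinder (hμ : IsRestrictedPower γ B μ) :
    ∀ᵐ x ∂μ, x ∈ ⋃ n, tailCylinder B n :=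
  hμ.ae_eventually_mem.mono fun _ hx => mem_iUnion.2 (eventually_atTop.1 hx)

theorem measure_eq_iSup_inter_tailCylinder (hμ : IsRestrictedPower γ B μ) (s : Set (ℕ → Y)) :
    μ s = ⨆ n, μ (s ∩ tailCylinder B n) := by
  rw [← (monotone_const.inter (monotone_tailCylinder B)).measure_iUnion, ← inter_iUnion]
  exact (measure_inter_conull hμ.ae_mem_iUnion_tailCylinder).symm

variable [IsFiniteMeasure γ]

theorem measure_tailCylinder_ne_top (hμ : IsRestrictedPower γ B μ)
    (hBm : ∀ j, MeasurableSet (B j)) (hB0 : ∀ j, γ (B j) ≠ 0) (n : ℕ) :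
    μ (tailCylinder B n) ≠ ∞ := by
  rw [tailCylinder_eq_univ_pi, hμ.measure_univ_pi n _
    (fun j => by split_ifs; exacts [MeasurableSet.univ, hBm j]) fun j hj => if_neg (not_lt.2 hj)]
  exact ENNReal.prod_ne_top fun j _ => ENNReal.div_ne_top (measure_ne_top _ _) (hB0 j)

theorem measure_univ_pi_inter_preimage_eval (hμ : IsRestrictedPower γ B μ)
    (hB0 : ∀ j, γ (B j) ≠ 0) {m k : ℕ} {C : ℕ → Set Y}
    (hCm : ∀ j, MeasurableSet (C j)) (hCB : ∀ j, m ≤ j → C j = B j) (hCk : C k = B k)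
    {E : Set Y} (hE : MeasurableSet E) :
    μ (univ.pi C ∩ eval k ⁻¹' E) = μ (univ.pi C) * (γ (B k ∩ E) / γ (B k)) := by
  set M := max m (k + 1)
  have hkM : k ∈ Finset.range M := Finset.mem_range.2 (by omega)
  have hC'm : ∀ j, MeasurableSet (update C k (C k ∩ E) j) :=
    (forall_update_iff C fun _ s => MeasurableSet s).2 ⟨(hCm k).inter hE, fun j _ => hCm j⟩
  rw [univ_pi_inter_preimage_eval,
    hμ.measure_univ_pi M _ hC'm fun j hj => by rw [update_of_ne (by omega), hCB j (by omega)],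
    hμ.measure_univ_pi M C hCm fun j hj => hCB j (by omega),
    ← Finset.mul_prod_erase _ _ hkM, ← Finset.mul_prod_erase _ _ hkM, update_self, hCk,
    ENNReal.div_self (hB0 k) (measure_ne_top _ _), one_mul, mul_comm]
  congr 1
  exact Finset.prod_congr rfl fun j hj => by rw [update_of_ne (Finset.ne_of_mem_erase hj)]

theorem measure_univ_pi_inter_iInter_preimage_eval (hμ : IsRestrictedPower γ B μ)
    (hB0 : ∀ j, γ (B j) ≠ 0) {m : ℕ} {C : ℕ → Set Y} (hCm : ∀ j, MeasurableSet (C j))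
    (hCB : ∀ j, m ≤ j → C j = B j) {E : ℕ → Set Y} (hE : ∀ j, MeasurableSet (E j))
    (s : Finset ℕ) (hCs : ∀ j ∈ s, C j = B j) :
    μ (univ.pi C ∩ ⋂ j ∈ s, eval j ⁻¹' E j) =
      μ (univ.pi C) * ∏ j ∈ s, γ (B j ∩ E j) / γ (B j) := by
  induction s using Finset.induction_on generalizing C m with
  | empty => simp
  | insert a s ha ih =>
    have hCa := hCs a (Finset.mem_insert_self a s)
    rw [Finset.set_biInter_insert, ← inter_assoc, univ_pi_inter_preimage_eval,
      ih (m := max m (a + 1))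
        ((forall_update_iff C fun _ s => MeasurableSet s).2
          ⟨(hCm a).inter (hE a), fun j _ => hCm j⟩)
        (fun j hj => by rw [update_of_ne (by omega), hCB j (by omega)])
        (fun j hj => by
          rw [update_of_ne (ne_of_mem_of_not_mem hj ha), hCs j (Finset.mem_insert_of_mem hj)]),
      ← univ_pi_inter_preimage_eval, hμ.measure_univ_pi_inter_preimage_eval hB0 hCm hCB hCa (hE a),
      Finset.prod_insert ha, mul_assoc]

theorem ae_eventually_mem_preimage (hμ : IsRestrictedPower γ B μ)
    (hBm : ∀ j, MeasurableSet (B j)) (hB0 : ∀ j, γ (B j) ≠ 0) {S : Y → Y} (hS : Measurable S)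
    (hsum : ∑' j, γ (B j \ S ⁻¹' B j) / γ (B j) ≠ ∞) :
    ∀ᵐ x ∂μ, ∀ᶠ j in atTop, S (x j) ∈ B j := by
  have hN : ∀ N, ∀ᵐ x ∂μ, x ∈ tailCylinder B N → ∀ᶠ j in atTop, S (x j) ∈ B j := by
    intro N
    set bad : ℕ → Set (ℕ → Y) := fun k => tailCylinder B N ∩ eval (k + N) ⁻¹' (S ⁻¹' B (k + N))ᶜ
    have hbad : ∀ k, μ (bad k) =
        μ (tailCylinder B N) * (γ (B (k + N) \ S ⁻¹' B (k + N)) / γ (B (k + N))) := fun k => by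
      simp only [bad, tailCylinder_eq_univ_pi]
      exact hμ.measure_univ_pi_inter_preimage_eval hB0
        (fun j => by split_ifs; exacts [MeasurableSet.univ, hBm j])
        (fun j hj => if_neg (not_lt.2 hj)) (if_neg (by omega)) (hS (hBm _)).compl
    have hsum_bad : ∑' k, μ (bad k) ≠ ∞ := by
      rw [tsum_congr hbad, ENNReal.tsum_mul_left]
      exact ENNReal.mul_ne_top (hμ.measure_tailCylinder_ne_top hBm hB0 N) <| ne_top_of_le_ne_top
        hsum (ENNReal.tsum_comp_le_tsum_of_injective (add_left_injective N) _)
    filter_upwards [ae_eventually_notMem hsum_bad] with x hx hxN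
    obtain ⟨K, hK⟩ := eventually_atTop.1 hx
    refine eventually_atTop.2 ⟨K + N, fun j hj => ?_⟩
    have hjN : j - N + N = j := by omega
    simpa [bad, hjN, hxN] using hK (j - N) (by omega)
  filter_upwards [hμ.ae_eventually_mem, ae_all_iff.2 hN] with x hx hall
  obtain ⟨N, hxN⟩ := eventually_atTop.1 hx
  exact hall N hxN

theorem measure_univ_pi_ite (hμ : IsRestrictedPower γ B μ) (hBm : ∀ j, MeasurableSet (B j))
    (hB0 : ∀ j, γ (B j) ≠ 0) {m M : ℕ} {D : ℕ → Set Y} (hDm : ∀ j, MeasurableSet (D j))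
    (hDB : ∀ j, m ≤ j → γ (D j) = γ (B j)) (hM : m ≤ M) :
    μ (univ.pi fun j => if j < M then D j else B j) =
      ∏ j ∈ Finset.range m, γ (D j) / γ (B j) := by
  rw [hμ.measure_univ_pi M _ (fun j => by split_ifs; exacts [hDm j, hBm j])
      fun j hj => if_neg (not_lt.2 hj),
    ← Finset.prod_range_mul_prod_Ico _ hM, Finset.prod_eq_one (s := Finset.Ico m M) fun j hj => by
      rw [if_pos (Finset.mem_Ico.1 hj).2, hDB j (Finset.mem_Ico.1 hj).1,
        ENNReal.div_self (hB0 j) (measure_ne_top _ _)], mul_one]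
  exact Finset.prod_congr rfl fun j hj => by
    rw [if_pos (lt_of_lt_of_le (Finset.mem_range.1 hj) hM)]

theorem measure_univ_pi_of_tendsto_tsum (hμ : IsRestrictedPower γ B μ)
    (hBm : ∀ j, MeasurableSet (B j)) (hB0 : ∀ j, γ (B j) ≠ 0) {m : ℕ} {D : ℕ → Set Y}
    (hDm : ∀ j, MeasurableSet (D j)) (hDB : ∀ j, m ≤ j → γ (D j) = γ (B j))
    (hdefect : Tendsto (fun M => ∑' k, γ (B (k + M) \ D (k + M)) / γ (B (k + M)))
      atTop (𝓝 0)) :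
    μ (univ.pi D) = ∏ j ∈ Finset.range m, γ (D j) / γ (B j) := by
  set P := ∏ j ∈ Finset.range m, γ (D j) / γ (B j)
  set Q : ℕ → Set (ℕ → Y) := fun M => univ.pi fun j => if j < M then D j else B j
  have hQ : ∀ M, m ≤ M → μ (Q M) = P := fun M => hμ.measure_univ_pi_ite hBm hB0 hDm hDB
  refine le_antisymm ?_ ?_
  · rw [hμ.measure_eq_iSup_inter_tailCylinder]
    refine iSup_le fun M => ?_
    calc μ (univ.pi D ∩ tailCylinder B M)
        ≤ μ (Q (max M m)) := measure_mono fun x ⟨hxD, hxB⟩ => mem_univ_pi.2 fun j => by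
          split_ifs with hj
          exacts [hxD j trivial, hxB j (by omega)]
      _ = P := hQ _ (le_max_right M m)
  -- `Q M` has measure `P` and leaves `univ.pi D` only through a coordinate `k + M` in `B \ D`.
  have hbound : ∀ M, m ≤ M →
      P ≤ μ (univ.pi D) + P * ∑' k, γ (B (k + M) \ D (k + M)) / γ (B (k + M)) := by
    intro M hM
    have hcover : Q M ⊆ univ.pi D ∪ ⋃ k, Q M ∩ eval (k + M) ⁻¹' (D (k + M))ᶜ := by
      intro x hx
      by_cases hxD : x ∈ univ.pi D
      · exact Or.inl hxD
      · obtain ⟨j, hj⟩ : ∃ j, x j ∉ D j := by simpa using hxD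
        have hMj : M ≤ j := not_lt.1 fun hjM => hj (by simpa [hjM] using hx j)
        refine Or.inr (mem_iUnion.2 ⟨j - M, hx, ?_⟩)
        rwa [Nat.sub_add_cancel hMj]
    calc P = μ (Q M) := (hQ M hM).symm
      _ ≤ μ (univ.pi D) + ∑' k, μ (Q M ∩ eval (k + M) ⁻¹' (D (k + M))ᶜ) :=
        (measure_mono hcover).trans <|
          (measure_union_le _ _).trans (by gcongr; exact measure_iUnion_le _)
      _ = μ (univ.pi D) + P * ∑' k, γ (B (k + M) \ D (k + M)) / γ (B (k + M)) := by
        rw [← ENNReal.tsum_mul_left, ← hQ M hM]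
        congr 1
        exact tsum_congr fun k => hμ.measure_univ_pi_inter_preimage_eval hB0
          (fun j => by split_ifs; exacts [hDm j, hBm j]) (fun j hj => if_neg (not_lt.2 hj))
          (if_neg (by omega)) (hDm _).compl
  have hP : P ≠ ∞ :=
    ENNReal.prod_ne_top fun j _ => ENNReal.div_ne_top (measure_ne_top _ _) (hB0 j)
  have hlim : Tendsto (fun M => μ (univ.pi D) +
      P * ∑' k, γ (B (k + M) \ D (k + M)) / γ (B (k + M))) atTop (𝓝 (μ (univ.pi D))) := by
    simpa using tendsto_const_nhds.add (ENNReal.Tendsto.const_mul hdefect (Or.inr hP))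
  exact ge_of_tendsto hlim (eventually_atTop.2 ⟨m, hbound⟩)

theorem measure_preimage_univ_pi (hμ : IsRestrictedPower γ B μ)
    (hBm : ∀ j, MeasurableSet (B j)) (hB0 : ∀ j, γ (B j) ≠ 0) {S : Y → Y}
    (hS : MeasurePreserving S γ γ) (hsum : ∑' j, γ (B j \ S ⁻¹' B j) / γ (B j) ≠ ∞) {m : ℕ}
    {C : ℕ → Set Y} (hCm : ∀ j, MeasurableSet (C j)) (hCB : ∀ j, m ≤ j → C j = B j) :
    μ ((fun x j => S (x j)) ⁻¹' univ.pi C) = μ (univ.pi C) := by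
  have hγ : ∀ j, γ (S ⁻¹' C j) = γ (C j) := fun j =>
    hS.measure_preimage (hCm j).nullMeasurableSet
  have hdefect : Tendsto (fun M => ∑' k, γ (B (k + M) \ S ⁻¹' C (k + M)) / γ (B (k + M)))
      atTop (𝓝 0) := (ENNReal.tendsto_sum_nat_add _ hsum).congr' <| eventually_atTop.2
    ⟨m, fun M hM => tsum_congr fun k => by rw [hCB (k + M) (by omega)]⟩
  rw [show (fun x j => S (x j)) ⁻¹' univ.pi C = univ.pi fun j => S ⁻¹' C j from rfl,
    hμ.measure_univ_pi_of_tendsto_tsum hBm hB0 (fun j => hS.measurable (hCm j))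
      (fun j hj => by rw [hγ, hCB j hj]) hdefect, hμ.measure_univ_pi m C hCm hCB]
  simp only [hγ]

theorem map_eq (hμ : IsRestrictedPower γ B μ) (hBm : ∀ j, MeasurableSet (B j))
    (hB0 : ∀ j, γ (B j) ≠ 0) {S : Y → Y} (hS : MeasurePreserving S γ γ)
    (hsum : ∑' j, γ (B j \ S ⁻¹' B j) / γ (B j) ≠ ∞) :
    μ.map (fun x j => S (x j)) = μ := by
  set F : (ℕ → Y) → ℕ → Y := fun x j => S (x j)
  have hF : Measurable F :=
    measurable_pi_lambda _ fun j => hS.measurable.comp (measurable_pi_apply j)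
  have hU : MeasurableSet (⋃ n, tailCylinder B n) :=
    MeasurableSet.iUnion (measurableSet_tailCylinder hBm)
  have hrestrict : ∀ n, μ.restrict (tailCylinder B n) =
      (μ.map F).restrict (tailCylinder B n) := by
    intro n
    have := isFiniteMeasure_restrict.2 (hμ.measure_tailCylinder_ne_top hBm hB0 n)
    have hcyl : ∀ c ∈ squareCylinders fun _ => {s : Set Y | MeasurableSet s},
        μ.restrict (tailCylinder B n) c = (μ.map F).restrict (tailCylinder B n) c := by
      rintro _ ⟨s, t, ht, rfl⟩
      have htm : ∀ j, MeasurableSet (t j) := fun j => ht j trivial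
      have hcm : MeasurableSet ((s : Set ℕ).pi t) :=
        MeasurableSet.pi s.countable_toSet fun j _ => htm j
      obtain ⟨m, C, hCm, hCB, hC⟩ := exists_univ_pi_eq_pi_inter_tailCylinder hBm s htm n
      rw [Measure.restrict_apply hcm, Measure.restrict_apply hcm,
        Measure.map_apply hF (hcm.inter (measurableSet_tailCylinder hBm n)), hC,
        hμ.measure_preimage_univ_pi hBm hB0 hS hsum hCm hCB]
    refine ext_of_generate_finite _ generateFrom_squareCylinders.symm
      (isPiSystem_squareCylinders (fun _ => MeasurableSpace.isPiSystem_measurableSet)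
        fun _ => MeasurableSet.univ) hcyl ?_
    simpa using hcyl univ ⟨∅, fun _ => univ, fun _ _ => MeasurableSet.univ, by simp⟩
  have hmap_ae : ∀ᵐ y ∂μ.map F, y ∈ ⋃ n, tailCylinder B n :=
    (ae_map_iff hF.aemeasurable hU).2 <|
      (hμ.ae_eventually_mem_preimage hBm hB0 hS.measurable hsum).mono fun _ hx =>
        mem_iUnion.2 (eventually_atTop.1 hx)
  calc μ.map F
      = (μ.map F).restrict (⋃ n, tailCylinder B n) :=
        (Measure.restrict_eq_self_of_ae_mem hmap_ae).symm
    _ = μ.restrict (⋃ n, tailCylinder B n) := (Measure.restrict_iUnion_congr.2 hrestrict).symm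
    _ = μ := Measure.restrict_eq_self_of_ae_mem hμ.ae_mem_iUnion_tailCylinder

theorem isMPAction {G : Type*} [Group G] [MeasurableSpace G] (hμ : IsRestrictedPower γ B μ)
    (hBm : ∀ j, MeasurableSet (B j)) (hB0 : ∀ j, γ (B j) ≠ 0) {T : G → Y → Y}
    (hT : IsMPAction γ T) (hsum : ∀ g, ∑' j, γ (B j \ T g ⁻¹' B j) / γ (B j) ≠ ∞) :
    IsMPAction μ fun g x j => T g (x j) :=
  ⟨hT.1.pi ℕ, fun g => ⟨(hT.1.pi ℕ).measurable_apply g, hμ.map_eq hBm hB0 (hT.2 g) (hsum g)⟩⟩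

theorem tendsto_measure_image_tailCylinder_inter {G : Type*} [Group G] [MeasurableSpace G]
    [TopologicalSpace G] (hμ : IsRestrictedPower γ B μ) (hBm : ∀ j, MeasurableSet (B j))
    (hB0 : ∀ j, γ (B j) ≠ 0) {T : G → Y → Y} (hT : IsBorelAction T) (hmix : IsMixingAction γ T)
    {c : ℝ≥0∞} (hc : c < 1) (hBc : ∀ j, γ (B j) ≤ c) (n : ℕ) :
    Tendsto (fun g => μ ((fun x j => T g (x j)) '' tailCylinder B n ∩ tailCylinder B n))
      (cocompact G) (𝓝 0) := by
  rw [ENNReal.tendsto_nhds_zero]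
  intro ε hε
  obtain ⟨r, hcr, hr⟩ := exists_between hc
  have hpow := ENNReal.Tendsto.const_mul (ENNReal.tendsto_pow_atTop_nhds_zero_of_lt_one hr)
    (Or.inr (hμ.measure_tailCylinder_ne_top hBm hB0 n))
  rw [mul_zero] at hpow
  obtain ⟨k, hk⟩ := (hpow.eventually_le_const hε).exists
  have hratio : ∀ j, ∀ᶠ g in cocompact G, γ (B j ∩ T g '' B j) / γ (B j) ≤ r := fun j => by
    have h := ENNReal.Tendsto.div_const (hmix (B j) (B j) (hBm j) (hBm j)) (Or.inr (hB0 j))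
    rw [ENNReal.mul_div_cancel_right (hB0 j) (measure_ne_top _ _)] at h
    filter_upwards [h.eventually_le_const ((hBc j).trans_lt hcr)] with g hg
    rwa [inter_comm]
  filter_upwards [(Filter.eventually_all_finset (Finset.Ico n (n + k))).2 fun j _ => hratio j]
    with g hg
  calc μ ((fun x j => T g (x j)) '' tailCylinder B n ∩ tailCylinder B n)
      ≤ μ (tailCylinder B n ∩ ⋂ j ∈ Finset.Ico n (n + k), eval j ⁻¹' (T g '' B j)) :=
        measure_mono fun _ ⟨⟨x, hx, hgx⟩, hxn⟩ => ⟨hxn, mem_iInter₂.2 fun j hj =>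
          ⟨x j, hx j (Finset.mem_Ico.1 hj).1, congrFun hgx j⟩⟩
    _ = μ (tailCylinder B n) * ∏ j ∈ Finset.Ico n (n + k), γ (B j ∩ T g '' B j) / γ (B j) := by
        rw [tailCylinder_eq_univ_pi]
        exact hμ.measure_univ_pi_inter_iInter_preimage_eval hB0
          (fun j => by split_ifs; exacts [MeasurableSet.univ, hBm j])
          (fun j hj => if_neg (not_lt.2 hj))
          (fun j => by rw [hT.image_eq_preimage_inv]; exact hT.measurable_apply _ (hBm j)) _
          fun j hj => if_neg (not_lt.2 (Finset.mem_Ico.1 hj).1)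
    _ ≤ μ (tailCylinder B n) * r ^ k := by
        gcongr
        exact (Finset.prod_le_pow_card _ _ _ hg).trans_eq
          (by rw [Nat.card_Ico, Nat.add_sub_cancel_left])
    _ ≤ ε := hk

end IsRestrictedPower

end RestrictedPower

theorem restrictedPower_zeroType_general {G : Type*} [Group G]
    [TopologicalSpace G] [MeasurableSpace G]
    {Y : Type*} [MeasurableSpace Y]
    (γ : Measure Y) [IsProbabilityMeasure γ]
    (T : G → Y → Y) (hT : IsMPAction γ T) (hmix : IsMixingAction γ T)
    (B : ℕ → Set Y) (hBm : ∀ n, MeasurableSet (B n)) (hB : ∀ n, γ (B n) = 1 / 2)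
    (hsum : ∀ K : Set G, IsCompact K →
      (∑' n, ⨆ g ∈ K, γ (symmDiff (T g '' B n) (B n))) ≠ ∞)
    (μ : Measure (ℕ → Y))
    (hcyl : ∀ (m : ℕ) (C : ℕ → Set Y), (∀ j, MeasurableSet (C j)) →
      (∀ j, m ≤ j → C j = B j) →
      μ {x : ℕ → Y | ∀ j, x j ∈ C j} = ∏ j ∈ Finset.range m, γ (C j) / γ (B j))
    (hsupp : μ ((⋃ n, tailCylinder B n)ᶜ) = 0) :
    IsZeroType μ (fun (g : G) (x : ℕ → Y) (j : ℕ) => T g (x j)) := by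
  have hμ : IsRestrictedPower γ B μ :=
    ⟨fun m C hCm hCB => by simpa [Set.pi] using hcyl m C hCm hCB,
      ae_iff.2 <| measure_mono_null (t := (⋃ n, tailCylinder B n)ᶜ)
        (fun x hx hxU => hx (eventually_atTop.2 (mem_iUnion.1 hxU))) hsupp⟩
  have hB0 : ∀ j, γ (B j) ≠ 0 := fun j => by simp [hB]
  have hdefect : ∀ g, ∑' j, γ (B j \ T g ⁻¹' B j) / γ (B j) ≠ ∞ := by
    intro g
    have hg := hsum {g⁻¹} isCompact_singleton
    simp only [mem_singleton_iff, iSup_iSup_eq_left] at hg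
    simp_rw [hB, ENNReal.div_eq_inv_mul, ENNReal.tsum_mul_left]
    refine ENNReal.mul_ne_top (by norm_num) <|
      ne_top_of_le_ne_top hg (ENNReal.tsum_le_tsum fun j => measure_mono ?_)
    rw [hT.1.image_eq_preimage_inv, inv_inv, Set.symmDiff_def]
    exact subset_union_right
  exact IsZeroType.of_tendsto_exhaustion (hμ.isMPAction hBm hB0 hT hdefect)
    (measurableSet_tailCylinder hBm) (monotone_tailCylinder B) hμ.ae_mem_iUnion_tailCylinder
    (hμ.tendsto_measure_image_tailCylinder_inter hBm hB0 hT.1 hmix (c := 1 / 2) (by norm_num)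
      fun j => (hB j).le)

/-- **From the proof of Theorem B.** If moreover `T` is mixing, then the product action
`𝐓 = (T g × T g × ⋯)_{g ∈ G}` on the restricted infinite power `(X, γ^𝐁)` is of 0-type. -/
theorem restrictedPower_zeroType {G : Type*} [Group G]
    [TopologicalSpace G] [IsTopologicalGroup G] [LocallyCompactSpace G]
    [SecondCountableTopology G] [NoncompactSpace G] [MeasurableSpace G] [BorelSpace G]
    {Y : Type*} [MeasurableSpace Y] [StandardBorelSpace Y]
    (γ : Measure Y) [IsProbabilityMeasure γ] (hna : ∀ y : Y, γ {y} = 0)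
    (T : G → Y → Y) (hT : IsMPAction γ T) (hmix : IsMixingAction γ T)
    (B : ℕ → Set Y) (hBm : ∀ n, MeasurableSet (B n)) (hB : ∀ n, γ (B n) = 1 / 2)
    (hsum : ∀ K : Set G, IsCompact K →
      (∑' n, ⨆ g ∈ K, γ (symmDiff (T g '' B n) (B n))) ≠ ∞)
    (μ : Measure (ℕ → Y))
    (hcyl : ∀ (m : ℕ) (C : ℕ → Set Y), (∀ j, MeasurableSet (C j)) →
      (∀ j, m ≤ j → C j = B j) →
      μ {x : ℕ → Y | ∀ j, x j ∈ C j} = ∏ j ∈ Finset.range m, γ (C j) / γ (B j))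
    (hsupp : μ ((⋃ n, tailCylinder B n)ᶜ) = 0) :
    IsZeroType μ (fun (g : G) (x : ℕ → Y) (j : ℕ) => T g (x j)) :=
  restrictedPower_zeroType_general γ T hT hmix B hBm hB hsum μ hcyl hsupp
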